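/- Let Y be a δ-hyperbolic geodesic metric space, μ₁ a geodesic segment joining a and b, p ∈ Y, and q a point on μ₁ nearest to p. Let φ : Y → Y be a (K,ε)-quasi-isometry, μ₂ a geodesic segment joining φ(a) and φ(b), and r a point on μ₂ nearest to φ(p). Then d(r, φ(q)) ≤ C₄, where C₄ depends only on K, ε and δ. In other words, quasi-isometries coarsely commute with nearest-point projections onto geodesics. -/

import Mathlib

open Metric Set Filter

/-- A geodesic parametrization from `a` to `b`, defined on `[0, dist a b]`. -/
def IsGeodParam {Y : Type*} [MetricSpace Y] (f : ℝ → Y) (a b : Y) : Prop :=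
  f 0 = a ∧ f (dist a b) = b ∧
    ∀ s ∈ Set.Icc (0:ℝ) (dist a b), ∀ t ∈ Set.Icc (0:ℝ) (dist a b),
      dist (f s) (f t) = |s - t|

/-- `σ` is a geodesic segment joining `a` and `b`. -/
def IsGeodSeg {Y : Type*} [MetricSpace Y] (σ : Set Y) (a b : Y) : Prop :=
  ∃ f, IsGeodParam f a b ∧ σ = f '' Set.Icc 0 (dist a b)

/-- A geodesic metric space. -/
def GeodesicSpace (Y : Type*) [MetricSpace Y] : Prop :=
  ∀ a b : Y, ∃ σ : Set Y, IsGeodSeg σ a b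

/-- Gromov δ-hyperbolicity via slim triangles. -/
def SlimTriangles (Y : Type*) [MetricSpace Y] (δ : ℝ) : Prop :=
  ∀ a b c : Y, ∀ s₁ s₂ s₃ : Set Y, IsGeodSeg s₁ a b → IsGeodSeg s₂ b c →
    IsGeodSeg s₃ a c → ∀ x ∈ s₃, ∃ y ∈ s₁ ∪ s₂, dist x y ≤ δ

/-- The Gromov product `(a,b)_c`. -/
noncomputable def gromovProd {Y : Type*} [MetricSpace Y] (c a b : Y) : ℝ :=
  (dist a c + dist b c - dist a b) / 2

/-- `q` is a point of `σ` nearest to `p`. -/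
def IsNearestPt {Y : Type*} [MetricSpace Y] (σ : Set Y) (p q : Y) : Prop :=
  q ∈ σ ∧ ∀ z ∈ σ, dist p q ≤ dist p z

/-- A `(K,ε)`-quasigeodesic (quasi-isometric embedding of an interval `I ⊆ ℝ`). -/
def QuasiGeodesicOn {Y : Type*} [MetricSpace Y] (K ε : ℝ) (f : ℝ → Y) (I : Set ℝ) : Prop :=
  ∀ s ∈ I, ∀ t ∈ I, |s - t| / K - ε ≤ dist (f s) (f t) ∧ dist (f s) (f t) ≤ K * |s - t| + ε

/-- A `(K,ε)`-quasi-isometric embedding. -/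
def QIEmbedding {Y Z : Type*} [MetricSpace Y] [MetricSpace Z] (K ε : ℝ) (f : Y → Z) : Prop :=
  ∀ x y : Y, dist x y / K - ε ≤ dist (f x) (f y) ∧ dist (f x) (f y) ≤ K * dist x y + ε

/-
The nearest point `q` of `p` on `[a, b]` is a `2δ`-coarse centre of the triangle `a b p`: all three
Gromov products at `q` are at most `2δ`; likewise `r` for the triangle `φ a, φ b, φ p`. A
quasi-isometric embedding sends coarse centres to coarse centres, since a small product
`(x, y)_z` puts `z` near a geodesic `[x, y]` and, by the Morse lemma, `φ [x, y]` stays uniformly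
close to `[φ x, φ y]`. Finally, two coarse centres of one triangle are uniformly close.

The Morse lemma comes from the coarse contraction of nearest-point projection onto a geodesic:
along a stretch of a sampled quasi-geodesic that stays far from the geodesic, consecutive
projections are `14δ`-close, and the linear lower bound of the quasi-geodesic allows this only
on stretches of bounded length.
-/

variable {Y Z : Type*} [MetricSpace Y] [MetricSpace Z]

namespace IsGeodParam

variable {f : ℝ → Y} {a b : Y} {t : ℝ}

theorem dist_left (hf : IsGeodParam f a b) (ht : t ∈ Icc 0 (dist a b)) : dist a (f t) = t := by
  obtain ⟨h0, -, hd⟩ := hf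
  rw [← h0, hd 0 ⟨le_rfl, dist_nonneg⟩ t ht, zero_sub, abs_neg, abs_of_nonneg ht.1]

theorem dist_right (hf : IsGeodParam f a b) (ht : t ∈ Icc 0 (dist a b)) :
    dist (f t) b = dist a b - t := by
  obtain ⟨-, hL, hd⟩ := hf
  conv_lhs => rw [← hL]
  rw [hd t ht _ ⟨dist_nonneg, le_rfl⟩, abs_sub_comm, abs_of_nonneg (sub_nonneg.2 ht.2)]

theorem lipschitzOnWith (hf : IsGeodParam f a b) : LipschitzOnWith 1 f (Icc 0 (dist a b)) :=
  LipschitzOnWith.of_dist_le_mul fun s hs u hu => by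
    rw [hf.2.2 s hs u hu, NNReal.coe_one, one_mul, Real.dist_eq]

theorem isGeodSeg_image_Icc (hf : IsGeodParam f a b) {u v : ℝ} (hu : u ∈ Icc 0 (dist a b))
    (hv : v ∈ Icc 0 (dist a b)) (huv : u ≤ v) : IsGeodSeg (f '' Icc u v) (f u) (f v) := by
  have hsub : Icc u v ⊆ Icc 0 (dist a b) := Icc_subset_Icc hu.1 hv.2
  have huv' : dist (f u) (f v) = v - u := by
    rw [hf.2.2 u hu v hv, abs_sub_comm, abs_of_nonneg (sub_nonneg.2 huv)]
  refine ⟨fun s => f (s + u), ⟨by simp, by simp [huv'], fun s hs t ht => ?_⟩, ?_⟩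
  · rw [huv'] at hs ht
    rw [hf.2.2 _ (hsub ⟨by linarith [hs.1], by linarith [hs.2]⟩) _
      (hsub ⟨by linarith [ht.1], by linarith [ht.2]⟩)]
    ring_nf
  · rw [huv', ← image_image f (fun s => s + u), image_add_const_Icc, zero_add, sub_add_cancel]

end IsGeodParam

namespace IsGeodSeg

variable {σ : Set Y} {a b x y : Y}

theorem left_mem (h : IsGeodSeg σ a b) : a ∈ σ := by
  obtain ⟨f, ⟨h0, -, -⟩, rfl⟩ := h
  exact ⟨0, ⟨le_rfl, dist_nonneg⟩, h0⟩

theorem right_mem (h : IsGeodSeg σ a b) : b ∈ σ := by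
  obtain ⟨f, ⟨-, hL, -⟩, rfl⟩ := h
  exact ⟨dist a b, ⟨dist_nonneg, le_rfl⟩, hL⟩

theorem dist_add_dist (h : IsGeodSeg σ a b) (hx : x ∈ σ) : dist a x + dist x b = dist a b := by
  obtain ⟨f, hf, rfl⟩ := h
  obtain ⟨t, ht, rfl⟩ := hx
  rw [hf.dist_left ht, hf.dist_right ht]
  ring

theorem symm (h : IsGeodSeg σ a b) : IsGeodSeg σ b a := by
  obtain ⟨f, ⟨h0, hL, hd⟩, rfl⟩ := h
  have hmem : ∀ s ∈ Icc 0 (dist b a), dist a b - s ∈ Icc 0 (dist a b) := fun s hs => by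
    rw [dist_comm] at hs
    exact ⟨by linarith [hs.2], by linarith [hs.1]⟩
  refine ⟨fun s => f (dist a b - s), ⟨by simpa using hL, by simpa [dist_comm b a] using h0,
    fun s hs u hu => ?_⟩, ?_⟩
  · rw [hd _ (hmem s hs) _ (hmem u hu), abs_sub_comm]
    ring_nf
  · rw [dist_comm b a, ← image_image f (fun s => dist a b - s), image_const_sub_Icc, sub_zero,
      sub_self]

theorem exists_subset (h : IsGeodSeg σ a b) (hx : x ∈ σ) (hy : y ∈ σ) :
    ∃ τ ⊆ σ, IsGeodSeg τ x y := by
  obtain ⟨f, hf, rfl⟩ := h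
  obtain ⟨u, hu, rfl⟩ := hx
  obtain ⟨v, hv, rfl⟩ := hy
  rcases le_total u v with huv | hvu
  · exact ⟨_, image_mono (Icc_subset_Icc hu.1 hv.2), hf.isGeodSeg_image_Icc hu hv huv⟩
  · exact ⟨_, image_mono (Icc_subset_Icc hv.1 hu.2), (hf.isGeodSeg_image_Icc hv hu hvu).symm⟩

theorem isCompact (h : IsGeodSeg σ a b) : IsCompact σ := by
  obtain ⟨f, hf, rfl⟩ := h
  exact isCompact_Icc.image_of_continuousOn hf.lipschitzOnWith.continuousOn

theorem exists_isNearestPt (h : IsGeodSeg σ a b) (p : Y) : ∃ q, IsNearestPt σ p q := by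
  obtain ⟨q, hq, hmin⟩ := h.isCompact.exists_isMinOn ⟨a, h.left_mem⟩
    (continuous_const.dist continuous_id).continuousOn (f := fun z => dist p z)
  exact ⟨q, hq, fun z hz => hmin hz⟩

theorem gromovProd_le_dist (h : IsGeodSeg σ a b) (hx : x ∈ σ) (z : Y) :
    gromovProd z a b ≤ dist z x := by
  have := h.dist_add_dist hx
  have := dist_triangle a x z
  have := dist_triangle b x z
  unfold gromovProd
  linarith [dist_comm b x, dist_comm x z]

end IsGeodSeg

theorem gromovProd_comm (c a b : Y) : gromovProd c a b = gromovProd c b a := by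
  unfold gromovProd
  rw [dist_comm a b]
  ring

theorem gromovProd_add_gromovProd (x z₁ z₂ : Y) :
    gromovProd z₁ x z₂ + gromovProd z₂ x z₁ = dist z₁ z₂ := by
  unfold gromovProd
  rw [dist_comm z₂ z₁]
  ring

def IsContracting (σ : Set Y) (κ : ℝ) : Prop :=
  ∀ ⦃x y px py : Y⦄, IsNearestPt σ x px → IsNearestPt σ y py →
    dist x y ≤ dist x px + dist y py → dist px py ≤ κ

def IsCoarseCenter (C : ℝ) (z x y w : Y) : Prop :=
  gromovProd z x y ≤ C ∧ gromovProd z x w ≤ C ∧ gromovProd z y w ≤ C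

section Hyperbolic

variable {δ : ℝ} {σ : Set Y}

theorem exists_mem_dist_le_gromovProd (hG : GeodesicSpace Y) (hS : SlimTriangles Y δ) {x z : Y}
    (h : IsGeodSeg σ x z) (w : Y) : ∃ m ∈ σ, dist w m ≤ gromovProd w x z + 2 * δ := by
  obtain ⟨s₁, hs₁⟩ := hG x w
  obtain ⟨s₂, hs₂⟩ := hG w z
  obtain ⟨f, hf, rfl⟩ := h
  -- the point of `[x, z]` at distance `(z, w)_x` from `x`
  have ht : gromovProd x z w ∈ Icc 0 (dist x z) := by
    unfold gromovProd
    constructor <;> linarith [dist_triangle z x w, dist_triangle x z w, dist_comm x z, dist_comm x w]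
  set m := f (gromovProd x z w)
  have hm : m ∈ f '' Icc 0 (dist x z) := mem_image_of_mem f ht
  obtain ⟨y, hy, hmy⟩ := hS x w z s₁ s₂ _ hs₁ hs₂ ⟨f, hf, rfl⟩ m hm
  refine ⟨m, hm, ?_⟩
  have hx : dist x m = gromovProd x z w := hf.dist_left ht
  have hz : dist m z = dist x z - gromovProd x z w := hf.dist_right ht
  have hwm := dist_triangle_right w m y
  have hw₁ : gromovProd w x z = dist x w - gromovProd x z w := by
    unfold gromovProd
    rw [dist_comm z x, dist_comm w x, dist_comm z w]
    ring
  have hw₂ : gromovProd w x z = dist w z - (dist x z - gromovProd x z w) := by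
    unfold gromovProd
    rw [dist_comm z x, dist_comm w x, dist_comm z w]
    ring
  rcases hy with hy | hy
  · linarith [hs₁.dist_add_dist hy, dist_triangle x y m, dist_comm y w, dist_comm y m]
  · linarith [hs₂.dist_add_dist hy, dist_triangle m y z]

theorem min_gromovProd_le (hG : GeodesicSpace Y) (hS : SlimTriangles Y δ) (w x y z : Y) :
    min (gromovProd w x y) (gromovProd w y z) ≤ gromovProd w x z + 3 * δ := by
  obtain ⟨s₁, hs₁⟩ := hG x y
  obtain ⟨s₂, hs₂⟩ := hG y z
  obtain ⟨s₃, hs₃⟩ := hG x z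
  obtain ⟨m, hm, hwm⟩ := exists_mem_dist_le_gromovProd hG hS hs₃ w
  obtain ⟨y', hy', hmy'⟩ := hS x y z s₁ s₂ s₃ hs₁ hs₂ hs₃ m hm
  have hwy' : dist w y' ≤ gromovProd w x z + 3 * δ := by linarith [dist_triangle w m y']
  rcases hy' with hy' | hy'
  · exact (min_le_left _ _).trans ((hs₁.gromovProd_le_dist hy' w).trans hwy')
  · exact (min_le_right _ _).trans ((hs₂.gromovProd_le_dist hy' w).trans hwy')

theorem dist_add_dist_le_max (hG : GeodesicSpace Y) (hS : SlimTriangles Y δ) (a b c d : Y) :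
    dist a c + dist b d ≤ max (dist a b + dist c d) (dist a d + dist b c) + 6 * δ := by
  have h := min_gromovProd_le hG hS d a b c
  rcases le_total (gromovProd d a b) (gromovProd d b c) with h' | h'
  · rw [min_eq_left h'] at h
    unfold gromovProd at h
    linarith [le_max_left (dist a b + dist c d) (dist a d + dist b c), dist_comm a d, dist_comm b d,
      dist_comm c d]
  · rw [min_eq_right h'] at h
    unfold gromovProd at h
    linarith [le_max_right (dist a b + dist c d) (dist a d + dist b c), dist_comm a d, dist_comm b d,
      dist_comm c d]

theorem IsNearestPt.gromovProd_le (hG : GeodesicSpace Y) (hS : SlimTriangles Y δ) {a b p q z : Y}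
    (h : IsGeodSeg σ a b) (hq : IsNearestPt σ p q) (hz : z ∈ σ) : gromovProd q p z ≤ 2 * δ := by
  obtain ⟨τ, hτσ, hτ⟩ := h.exists_subset hq.1 hz
  obtain ⟨m, hm, hpm⟩ := exists_mem_dist_le_gromovProd hG hS hτ p
  have := hq.2 m (hτσ hm)
  unfold gromovProd at *
  linarith [dist_comm p q, dist_comm z q, dist_comm z p]

theorem IsGeodSeg.isContracting (hG : GeodesicSpace Y) (hS : SlimTriangles Y δ) {a b : Y}
    (h : IsGeodSeg σ a b) : IsContracting σ (14 * δ) := by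
  intro x y px py hx hy hxy
  have hxpy := hx.gromovProd_le hG hS h hy.1
  have hypx := hy.gromovProd_le hG hS h hx.1
  have hquad := dist_add_dist_le_max hG hS x y py px
  unfold gromovProd at hxpy hypx
  rcases le_total (dist x y + dist py px) (dist x px + dist y py) with h' | h'
  · rw [max_eq_right h'] at hquad
    linarith [dist_nonneg (x := px) (y := py), dist_comm px py, dist_comm y px, dist_comm py y,
      dist_comm px x]
  · rw [max_eq_left h'] at hquad
    linarith [dist_comm px py, dist_comm y px, dist_comm py y, dist_comm px x]

theorem IsNearestPt.isCoarseCenter (hG : GeodesicSpace Y) (hS : SlimTriangles Y δ) (hδ : 0 ≤ δ)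
    {a b p q : Y} (h : IsGeodSeg σ a b) (hq : IsNearestPt σ p q) :
    IsCoarseCenter (2 * δ) q a b p := by
  refine ⟨?_, ?_, ?_⟩
  · linarith [h.gromovProd_le_dist hq.1 q, dist_self q]
  · rw [gromovProd_comm]
    exact hq.gromovProd_le hG hS h h.left_mem
  · rw [gromovProd_comm]
    exact hq.gromovProd_le hG hS h h.right_mem

theorem gromovProd_le_or_le (hG : GeodesicSpace Y) (hS : SlimTriangles Y δ) {z u v : Y} {C : ℝ}
    (h : gromovProd z u v ≤ C) (z' : Y) :
    gromovProd z u z' ≤ C + 3 * δ ∨ gromovProd z v z' ≤ C + 3 * δ := by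
  have := min_gromovProd_le hG hS z u z' v
  rw [gromovProd_comm z z' v] at this
  exact min_le_iff.1 (by linarith)

theorem IsCoarseCenter.dist_le (hG : GeodesicSpace Y) (hS : SlimTriangles Y δ) {x y w z₁ z₂ : Y}
    {C₁ C₂ : ℝ} (h₁ : IsCoarseCenter C₁ z₁ x y w) (h₂ : IsCoarseCenter C₂ z₂ x y w) :
    dist z₁ z₂ ≤ C₁ + C₂ + 6 * δ := by
  -- for each `zᵢ` at least two of the three vertices `u` have a small product `(u, zⱼ)_{zᵢ}`, so
  -- some `u` works for both, and `(u, z₂)_{z₁} + (u, z₁)_{z₂} = dist z₁ z₂`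
  have key : ∀ u, gromovProd z₁ u z₂ ≤ C₁ + 3 * δ → gromovProd z₂ u z₁ ≤ C₂ + 3 * δ →
      dist z₁ z₂ ≤ C₁ + C₂ + 6 * δ := fun u hu hu' => by
    linarith [gromovProd_add_gromovProd u z₁ z₂]
  obtain ⟨hxy, hxw, hyw⟩ := h₁
  obtain ⟨hxy', hxw', hyw'⟩ := h₂
  have := gromovProd_le_or_le hG hS hxy z₂
  have := gromovProd_le_or_le hG hS hxw z₂
  have := gromovProd_le_or_le hG hS hyw z₂
  have := gromovProd_le_or_le hG hS hxy' z₁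
  have := gromovProd_le_or_le hG hS hxw' z₁
  have := gromovProd_le_or_le hG hS hyw' z₁
  have := key x
  have := key y
  have := key w
  tauto

end Hyperbolic

theorem Nat.exists_gap_containing {P : ℕ → Prop} {i n : ℕ} (h0 : P 0) (hn : P n) (hi : ¬P i)
    (hin : i ≤ n) : ∃ a b, a < i ∧ i < b ∧ b ≤ n ∧ P a ∧ P b ∧ ∀ k ∈ Ioo a b, ¬P k := by
  classical
  have hex : ∃ j, i ≤ j ∧ P j := ⟨n, hin, hn⟩
  have ha : P (Nat.findGreatest P i) := Nat.findGreatest_spec (Nat.zero_le i) h0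
  have hb := Nat.find_spec hex
  refine ⟨Nat.findGreatest P i, Nat.find hex, (Nat.findGreatest_le i).lt_of_ne ?_,
    hb.1.lt_of_ne ?_, Nat.find_le ⟨hin, hn⟩, ha, hb.2, ?_⟩
  · rintro h
    exact hi (h ▸ ha)
  · rintro h
    exact hi (h ▸ hb.2)
  · rintro k ⟨hak, hkb⟩ hk
    rcases le_or_gt k i with hki | hik
    · exact Nat.findGreatest_is_greatest hak hki hk
    · exact Nat.find_min hex hkb ⟨hik.le, hk⟩

theorem dist_le_mul_of_dist_succ_le {f : ℕ → Y} {m n : ℕ} {C : ℝ} (hmn : m ≤ n)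
    (hf : ∀ k, m ≤ k → k < n → dist (f k) (f (k + 1)) ≤ C) :
    dist (f m) (f n) ≤ ((n : ℝ) - m) * C := by
  have := dist_le_Ico_sum_of_dist_le hmn (d := fun _ => C) fun {k} hmk hkn => hf k hmk hkn
  rwa [Finset.sum_const, Nat.card_Ico, nsmul_eq_mul, Nat.cast_sub hmn] at this

theorem IsNearestPt.dist_le_dist_add {σ : Set Y} {p p' q q' : Y} (hq : IsNearestPt σ p q)
    (hq' : IsNearestPt σ p' q') : dist p q ≤ dist p p' + dist p' q' :=
  (hq.2 q' hq'.1).trans (dist_triangle _ _ _)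

section Morse

variable {σ : Set Y} {κ : ℝ}

theorem IsContracting.dist_le_of_discrete {x π : ℕ → Y} {n : ℕ} {ℓ c e : ℝ}
    (hσ : IsContracting σ κ) (hπ : ∀ i, IsNearestPt σ (x i) (π i)) (h0 : x 0 ∈ σ)
    (hn : x n ∈ σ) (hℓ : 0 < ℓ) (hc : κ < c) (hstep : ∀ i < n, dist (x i) (x (i + 1)) ≤ ℓ)
    (hlow : ∀ i j, i ≤ j → j ≤ n → c * ((j : ℝ) - i) - e ≤ dist (x i) (x j)) {i : ℕ}
    (hi : i ≤ n) : dist (x i) (π i) ≤ ℓ + ℓ * (2 * ℓ + e) / (c - κ) := by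
  have he : 0 ≤ e := by simpa using hlow 0 0 le_rfl (Nat.zero_le n)
  have hcκ : 0 < c - κ := sub_pos.2 hc
  by_cases hsmall : dist (x i) (π i) < ℓ
  · have : 0 ≤ ℓ * (2 * ℓ + e) / (c - κ) := by positivity
    linarith
  have hnear : ∀ k, x k ∈ σ → dist (x k) (π k) < ℓ := fun k hk =>
    ((hπ k).2 _ hk).trans_lt (by rwa [dist_self])
  -- a maximal stretch `[a, b]` around `i` along which the points stay `ℓ`-far from `σ`
  obtain ⟨a, b, hai, hib, hbn, ha, hb, hgap⟩ := Nat.exists_gap_containing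
    (P := fun k => dist (x k) (π k) < ℓ) (hnear 0 h0) (hnear n hn) hsmall hi
  have hpair : ∀ k, a ≤ k → k < b → dist (π k) (π (k + 1)) ≤ κ := by
    intro k hak hkb
    refine hσ (hπ k) (hπ (k + 1)) ((hstep k (by omega)).trans ?_)
    have := dist_nonneg (x := x k) (y := π k)
    have := dist_nonneg (x := x (k + 1)) (y := π (k + 1))
    rcases hak.eq_or_lt with rfl | hak
    · linarith [not_lt.1 (hgap (a + 1) ⟨by omega, by omega⟩)]
    · linarith [not_lt.1 (hgap k ⟨hak, hkb⟩)]
  have hproj := dist_le_mul_of_dist_succ_le (f := π) (hai.trans hib).le hpair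
  have hlen : (c - κ) * ((b : ℝ) - a) ≤ 2 * ℓ + e := by
    have := hlow a b (hai.trans hib).le hbn
    have := dist_triangle4 (x a) (π a) (π b) (x b)
    rw [dist_comm (π b)] at this
    nlinarith
  have hfar : dist (x i) (π i) ≤ ℓ * ((b : ℝ) - a) + ℓ := by
    have := dist_le_mul_of_dist_succ_le (f := x) hib.le fun k _ hkb => hstep k (by omega)
    have : (a : ℝ) ≤ i := by exact_mod_cast hai.le
    have := (hπ i).dist_le_dist_add (hπ b)
    nlinarith
  have hba : (b : ℝ) - a ≤ (2 * ℓ + e) / (c - κ) := by rwa [le_div_iff₀ hcκ, mul_comm]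
  calc dist (x i) (π i) ≤ ℓ + ℓ * ((b : ℝ) - a) := by linarith
    _ ≤ ℓ + ℓ * ((2 * ℓ + e) / (c - κ)) := by gcongr
    _ = ℓ + ℓ * (2 * ℓ + e) / (c - κ) := by rw [mul_div_assoc]

def morseConst (κ K ε : ℝ) : ℝ :=
  (K ^ 2 * (κ + 1) + ε) * (2 * (K ^ 2 * (κ + 1) + ε) + κ + 3 + ε)

theorem IsContracting.exists_mem_dist_le_of_quasiGeodesicOn (hσ : IsContracting σ κ)
    (hnear : ∀ y, ∃ z, IsNearestPt σ y z) (hκ : 0 ≤ κ) {K ε : ℝ} (hK : 0 < K) (hε : 0 ≤ ε)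
    {g : ℝ → Y} {L t : ℝ} (hg : QuasiGeodesicOn K ε g (Icc 0 L)) (hg0 : g 0 ∈ σ) (hgL : g L ∈ σ)
    (ht : t ∈ Icc 0 L) : ∃ m ∈ σ, dist (g t) m ≤ morseConst κ K ε := by
  have hL : 0 ≤ L := ht.1.trans ht.2
  -- at mesh `Δ = K (κ + 1)` the lower quasi-geodesic bound grows by `κ + 1 > κ` per sample
  set Δ := K * (κ + 1)
  set ℓ := K ^ 2 * (κ + 1) + ε with hℓ
  have hΔpos : 0 < Δ := by positivity
  have hℓpos : 0 < ℓ := by positivity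
  have hg_close : ∀ s ∈ Icc 0 L, ∀ u ∈ Icc 0 L, |s - u| ≤ Δ → dist (g s) (g u) ≤ ℓ :=
    fun s hs u hu hsu => by nlinarith [(hg s hs u hu).2]
  set n := ⌈L / Δ⌉₊
  set T : ℕ → ℝ := fun i => min (i * Δ) L
  have hT_mem : ∀ i, T i ∈ Icc 0 L := fun i => ⟨le_min (by positivity) hL, min_le_right _ _⟩
  have hT_n : T n = L := min_eq_right ((div_le_iff₀ hΔpos).1 (Nat.le_ceil _))
  have hT_ge : ∀ i ≤ n, ((i : ℝ) - 1) * Δ ≤ T i := by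
    intro i hi
    have : (i : ℝ) - 1 < L / Δ := by
      linarith [Nat.ceil_lt_add_one (div_nonneg hL hΔpos.le), (Nat.cast_le (α := ℝ)).2 hi]
    exact le_min (by nlinarith) ((lt_div_iff₀ hΔpos).1 this).le
  choose π hπ using fun i => hnear (g (T i))
  have hstep : ∀ i < n, dist (g (T i)) (g (T (i + 1))) ≤ ℓ := fun i _ => by
    refine hg_close _ (hT_mem i) _ (hT_mem (i + 1)) ((abs_min_sub_min_le_max _ _ _ _).trans ?_)
    simp [← sub_mul, hΔpos.le, abs_of_pos hΔpos]
  have hlow : ∀ i j, i ≤ j → j ≤ n →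
      (κ + 1) * ((j : ℝ) - i) - (κ + 1 + ε) ≤ dist (g (T i)) (g (T j)) := by
    intro i j hij hj
    have h := (hg _ (hT_mem i) _ (hT_mem j)).1
    have hTi : T i ≤ i * Δ := min_le_left _ _
    have : ((j : ℝ) - i - 1) * Δ ≤ |T i - T j| := by
      rw [abs_sub_comm]
      exact le_trans (by linarith [hT_ge j hj]) (le_abs_self _)
    have : ((j : ℝ) - i - 1) * (κ + 1) ≤ |T i - T j| / K := by
      rwa [le_div_iff₀ hK, mul_assoc, mul_comm (κ + 1)]
    linarith
  have hsample : ∀ i ≤ n, dist (g (T i)) (π i) ≤ ℓ + ℓ * (2 * ℓ + (κ + 1 + ε)) := by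
    intro i hi
    simpa using hσ.dist_le_of_discrete (x := fun i => g (T i)) hπ (by simpa [T, hL] using hg0)
      (by simpa [hT_n] using hgL) hℓpos (lt_add_one κ) hstep hlow hi
  set i := ⌊t / Δ⌋₊
  have hiΔ : (i : ℝ) * Δ ≤ t := (le_div_iff₀ hΔpos).1 (Nat.floor_le (div_nonneg ht.1 hΔpos.le))
  have htΔ : t < (i + 1) * Δ := (div_lt_iff₀ hΔpos).1 (Nat.lt_floor_add_one _)
  have hin : i ≤ n := (Nat.floor_mono (by gcongr; exact ht.2)).trans (Nat.floor_le_ceil _)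
  have hTi : T i = i * Δ := min_eq_left (hiΔ.trans ht.2)
  have hgt : dist (g t) (g (T i)) ≤ ℓ :=
    hg_close _ ht _ (hT_mem i) (by rw [hTi, abs_of_nonneg (by linarith)]; linarith)
  refine ⟨π i, (hπ i).1, ?_⟩
  calc dist (g t) (π i) ≤ dist (g t) (g (T i)) + dist (g (T i)) (π i) := dist_triangle _ _ _
    _ ≤ morseConst κ K ε := by
      rw [morseConst, ← hℓ]
      linarith [hsample i hin]

end Morse

section QuasiIsometry

variable {δ δ' K ε : ℝ} {φ : Y → Z}

theorem IsGeodSeg.exists_mem_dist_map_le (hG : GeodesicSpace Z) (hS : SlimTriangles Z δ')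
    (hδ' : 0 ≤ δ') (hK : 0 < K) (hε : 0 ≤ ε) (hφ : QIEmbedding K ε φ) {σ : Set Y} {σ' : Set Z}
    {a b z : Y} (h : IsGeodSeg σ a b) (h' : IsGeodSeg σ' (φ a) (φ b)) (hz : z ∈ σ) :
    ∃ m ∈ σ', dist (φ z) m ≤ morseConst (14 * δ') K ε := by
  obtain ⟨f, hf, rfl⟩ := h
  obtain ⟨t, ht, rfl⟩ := hz
  refine (h'.isContracting hG hS).exists_mem_dist_le_of_quasiGeodesicOn h'.exists_isNearestPt
    (by positivity) hK hε (g := φ ∘ f) (fun s hs u hu => ?_) ?_ ?_ ht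
  · rw [← hf.2.2 s hs u hu]
    exact hφ _ _
  · simpa [hf.1] using h'.left_mem
  · simpa [hf.2.1] using h'.right_mem

theorem QIEmbedding.gromovProd_map_le (hGY : GeodesicSpace Y) (hSY : SlimTriangles Y δ)
    (hGZ : GeodesicSpace Z) (hSZ : SlimTriangles Z δ') (hδ' : 0 ≤ δ') (hK : 0 < K) (hε : 0 ≤ ε)
    (hφ : QIEmbedding K ε φ) {x y z : Y} {C : ℝ} (h : gromovProd z x y ≤ C) :
    gromovProd (φ z) (φ x) (φ y) ≤ K * (C + 2 * δ) + ε + morseConst (14 * δ') K ε := by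
  obtain ⟨σ, hσ⟩ := hGY x y
  obtain ⟨σ', hσ'⟩ := hGZ (φ x) (φ y)
  obtain ⟨m, hm, hzm⟩ := exists_mem_dist_le_gromovProd hGY hSY hσ z
  obtain ⟨m', hm', hmm'⟩ := hσ.exists_mem_dist_map_le hGZ hSZ hδ' hK hε hφ hσ' hm
  have hφzm : dist (φ z) (φ m) ≤ K * (C + 2 * δ) + ε :=
    (hφ z m).2.trans (by gcongr; linarith)
  calc gromovProd (φ z) (φ x) (φ y) ≤ dist (φ z) m' := hσ'.gromovProd_le_dist hm' _
    _ ≤ dist (φ z) (φ m) + dist (φ m) m' := dist_triangle _ _ _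
    _ ≤ K * (C + 2 * δ) + ε + morseConst (14 * δ') K ε := by linarith

theorem IsCoarseCenter.map (hGY : GeodesicSpace Y) (hSY : SlimTriangles Y δ)
    (hGZ : GeodesicSpace Z) (hSZ : SlimTriangles Z δ') (hδ' : 0 ≤ δ') (hK : 0 < K) (hε : 0 ≤ ε)
    (hφ : QIEmbedding K ε φ) {x y w z : Y} {C : ℝ} (h : IsCoarseCenter C z x y w) :
    IsCoarseCenter (K * (C + 2 * δ) + ε + morseConst (14 * δ') K ε) (φ z) (φ x) (φ y) (φ w) :=
  ⟨hφ.gromovProd_map_le hGY hSY hGZ hSZ hδ' hK hε h.1,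
    hφ.gromovProd_map_le hGY hSY hGZ hSZ hδ' hK hε h.2.1,
    hφ.gromovProd_map_le hGY hSY hGZ hSZ hδ' hK hε h.2.2⟩

end QuasiIsometry

/-- Quasi-isometries of a δ-hyperbolic geodesic space coarsely commute with
nearest-point projections onto geodesic segments. -/
theorem stmt3 (δ K ε : ℝ) (hδ : 0 ≤ δ) (hK : 1 ≤ K) (hε : 0 ≤ ε) :
    ∃ C₄ : ℝ,
      ∀ (Y : Type) (_ : MetricSpace Y), GeodesicSpace Y → SlimTriangles Y δ →
        ∀ (μ₁ μ₂ : Set Y) (a b p q r : Y) (φ : Y → Y),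
          IsGeodSeg μ₁ a b → IsNearestPt μ₁ p q →
          QIEmbedding K ε φ → (∀ z : Y, ∃ y : Y, dist z (φ y) ≤ ε) →
          IsGeodSeg μ₂ (φ a) (φ b) → IsNearestPt μ₂ (φ p) r →
            dist r (φ q) ≤ C₄ := by
  refine ⟨2 * δ + (K * (2 * δ + 2 * δ) + ε + morseConst (14 * δ) K ε) + 6 * δ, ?_⟩
  intro Y _ hG hS μ₁ μ₂ a b p q r φ h₁ hq hφ _ h₂ hr
  have hq' := (hq.isCoarseCenter hG hS hδ h₁).map hG hS hG hS hδ (by linarith) hε hφ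
  exact (hr.isCoarseCenter hG hS hδ h₂).dist_le hG hS hq'
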